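/- Exactness of the 3D polynomial sequence: ℝ → S_K →^grad U_K →^curl BDM₁(K) →^div P₀ → 0, where S_K is the 3D serendipity space of order 2 and U_K = P_{1,1,1}(ℝ³) + span{y²z,yz²,y²,z²}×span{x²z,xz²,x²,z²}×span{x²y,xy²,x²,y²}. -/

import Mathlib

/-!
All spaces involved are spanned by explicit monomials and every field in them is at most
quadratic in each variable, so `grad`, `curl` and `div` act on coefficient vectors:
`grad` maps `S_K` into `U_K`, `curl` maps `U_K` into `BDM₁`, and `div` maps `BDM₁` onto the
constant `a₀₁ + a₁₂ + a₂₃`. Since the `BDM₁` coefficients of a field are unique, `curl u = 0`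
becomes a list of linear relations among the coefficients of `u`, and these are exactly the
relations saying that `u` is the gradient of an explicit element of `S_K`. Likewise a
divergence-free field of `BDM₁` is the curl of an explicit field of `U_K`. A field of `S_K`
with vanishing gradient is constant by the mean value theorem, one variable at a time.
-/

/-- partial derivatives of a function of three real variables -/
noncomputable def pd1 (f : ℝ → ℝ → ℝ → ℝ) (x y z : ℝ) : ℝ := deriv (fun t => f t y z) x
noncomputable def pd2 (f : ℝ → ℝ → ℝ → ℝ) (x y z : ℝ) : ℝ := deriv (fun t => f x t z) y
noncomputable def pd3 (f : ℝ → ℝ → ℝ → ℝ) (x y z : ℝ) : ℝ := deriv (fun t => f x y t) z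

/-- the divergence of a 3D vector field -/
noncomputable def dv3 (q : ℝ → ℝ → ℝ → (Fin 3 → ℝ)) : ℝ → ℝ → ℝ → ℝ :=
  fun x y z => pd1 (fun a b c => q a b c 0) x y z + pd2 (fun a b c => q a b c 1) x y z
    + pd3 (fun a b c => q a b c 2) x y z

/-- the curl of a 3D vector field -/
noncomputable def curl3 (u : ℝ → ℝ → ℝ → (Fin 3 → ℝ)) : ℝ → ℝ → ℝ → (Fin 3 → ℝ) :=
  fun x y z =>
    ![pd2 (fun a b c => u a b c 2) x y z - pd3 (fun a b c => u a b c 1) x y z,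
      pd3 (fun a b c => u a b c 0) x y z - pd1 (fun a b c => u a b c 2) x y z,
      pd1 (fun a b c => u a b c 1) x y z - pd2 (fun a b c => u a b c 0) x y z]

/-- The 3D `BDM₁` space
`P₁(K,ℝ³) + curl span{(0,0,xy²),(0,0,x²y),(y²z,0,0),(yz²,0,0),(0,xz²,0),(0,x²z,0)}`,
where `curl(0,0,xy²) = (2xy,−y²,0)`, `curl(0,0,x²y) = (x²,−2xy,0)`,
`curl(y²z,0,0) = (0,y²,−2yz)`, `curl(yz²,0,0) = (0,2yz,−z²)`,
`curl(0,xz²,0) = (−2xz,0,z²)`, `curl(0,x²z,0) = (−x²,0,2xz)`. -/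
def BDM13 : Set (ℝ → ℝ → ℝ → (Fin 3 → ℝ)) :=
  {q | ∃ a : Fin 3 → Fin 4 → ℝ, ∃ c1 c2 c3 c4 c5 c6 : ℝ, ∀ x y z : ℝ,
    q x y z =
      ![a 0 0 + a 0 1 * x + a 0 2 * y + a 0 3 * z
          + c1 * (2 * x * y) + c2 * x ^ 2 - c5 * (2 * x * z) - c6 * x ^ 2,
        a 1 0 + a 1 1 * x + a 1 2 * y + a 1 3 * z
          - c1 * y ^ 2 - c2 * (2 * x * y) + c3 * y ^ 2 + c4 * (2 * y * z),
        a 2 0 + a 2 1 * x + a 2 2 * y + a 2 3 * z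
          - c3 * (2 * y * z) - c4 * z ^ 2 + c5 * z ^ 2 + c6 * (2 * x * z)]}

/-- The space `U_K = P_{1,1,1}(ℝ³)³ +
span{y²z,yz²,y²,z²} × span{x²z,xz²,x²,z²} × span{x²y,xy²,x²,y²}`. -/
def UK : Set (ℝ → ℝ → ℝ → (Fin 3 → ℝ)) :=
  {u | ∃ b : Fin 3 → Fin 8 → ℝ, ∃ α1 α2 α3 α4 β1 β2 β3 β4 γ1 γ2 γ3 γ4 : ℝ, ∀ x y z : ℝ,
    u x y z =
      ![b 0 0 + b 0 1 * x + b 0 2 * y + b 0 3 * z + b 0 4 * x * y + b 0 5 * x * z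
          + b 0 6 * y * z + b 0 7 * x * y * z
          + α1 * y ^ 2 * z + α2 * y * z ^ 2 + α3 * y ^ 2 + α4 * z ^ 2,
        b 1 0 + b 1 1 * x + b 1 2 * y + b 1 3 * z + b 1 4 * x * y + b 1 5 * x * z
          + b 1 6 * y * z + b 1 7 * x * y * z
          + β1 * x ^ 2 * z + β2 * x * z ^ 2 + β3 * x ^ 2 + β4 * z ^ 2,
        b 2 0 + b 2 1 * x + b 2 2 * y + b 2 3 * z + b 2 4 * x * y + b 2 5 * x * z
          + b 2 6 * y * z + b 2 7 * x * y * z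
          + γ1 * x ^ 2 * y + γ2 * x * y ^ 2 + γ3 * x ^ 2 + γ4 * y ^ 2]}

/-- the gradient of a scalar function of three variables -/
noncomputable def grad3 (s : ℝ → ℝ → ℝ → ℝ) : ℝ → ℝ → ℝ → (Fin 3 → ℝ) :=
  fun x y z => ![pd1 s x y z, pd2 s x y z, pd3 s x y z]

/-- The 3D serendipity space of order 2:
`S_K = P₂ + span{x²y,x²z,xy²,xz²,y²z,yz²,xyz,x²yz,xy²z,xyz²}`. -/
def SK3 : Set (ℝ → ℝ → ℝ → ℝ) :=
  {s | ∃ c : Fin 20 → ℝ, ∀ x y z : ℝ,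
    s x y z = c 0 + c 1 * x + c 2 * y + c 3 * z + c 4 * x ^ 2 + c 5 * y ^ 2 + c 6 * z ^ 2
      + c 7 * x * y + c 8 * x * z + c 9 * y * z
      + c 10 * x ^ 2 * y + c 11 * x ^ 2 * z + c 12 * x * y ^ 2 + c 13 * x * z ^ 2
      + c 14 * y ^ 2 * z + c 15 * y * z ^ 2 + c 16 * x * y * z
      + c 17 * x ^ 2 * y * z + c 18 * x * y ^ 2 * z + c 19 * x * y * z ^ 2}


def skPoly (c : Fin 20 → ℝ) : ℝ → ℝ → ℝ → ℝ := fun x y z =>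
  c 0 + c 1 * x + c 2 * y + c 3 * z + c 4 * x ^ 2 + c 5 * y ^ 2 + c 6 * z ^ 2
    + c 7 * x * y + c 8 * x * z + c 9 * y * z
    + c 10 * x ^ 2 * y + c 11 * x ^ 2 * z + c 12 * x * y ^ 2 + c 13 * x * z ^ 2
    + c 14 * y ^ 2 * z + c 15 * y * z ^ 2 + c 16 * x * y * z
    + c 17 * x ^ 2 * y * z + c 18 * x * y ^ 2 * z + c 19 * x * y * z ^ 2

def ukField (b : Fin 3 → Fin 8 → ℝ) (α β γ : Fin 4 → ℝ) : ℝ → ℝ → ℝ → (Fin 3 → ℝ) :=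
  fun x y z =>
    ![b 0 0 + b 0 1 * x + b 0 2 * y + b 0 3 * z + b 0 4 * x * y + b 0 5 * x * z
        + b 0 6 * y * z + b 0 7 * x * y * z
        + α 0 * y ^ 2 * z + α 1 * y * z ^ 2 + α 2 * y ^ 2 + α 3 * z ^ 2,
      b 1 0 + b 1 1 * x + b 1 2 * y + b 1 3 * z + b 1 4 * x * y + b 1 5 * x * z
        + b 1 6 * y * z + b 1 7 * x * y * z
        + β 0 * x ^ 2 * z + β 1 * x * z ^ 2 + β 2 * x ^ 2 + β 3 * z ^ 2,
      b 2 0 + b 2 1 * x + b 2 2 * y + b 2 3 * z + b 2 4 * x * y + b 2 5 * x * z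
        + b 2 6 * y * z + b 2 7 * x * y * z
        + γ 0 * x ^ 2 * y + γ 1 * x * y ^ 2 + γ 2 * x ^ 2 + γ 3 * y ^ 2]

def bdmField (a : Fin 3 → Fin 4 → ℝ) (c : Fin 6 → ℝ) : ℝ → ℝ → ℝ → (Fin 3 → ℝ) :=
  fun x y z =>
    ![a 0 0 + a 0 1 * x + a 0 2 * y + a 0 3 * z
        + c 0 * (2 * x * y) + c 1 * x ^ 2 - c 4 * (2 * x * z) - c 5 * x ^ 2,
      a 1 0 + a 1 1 * x + a 1 2 * y + a 1 3 * z
        - c 0 * y ^ 2 - c 1 * (2 * x * y) + c 2 * y ^ 2 + c 3 * (2 * y * z),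
      a 2 0 + a 2 1 * x + a 2 2 * y + a 2 3 * z
        - c 2 * (2 * y * z) - c 3 * z ^ 2 + c 4 * z ^ 2 + c 5 * (2 * x * z)]

lemma mem_SK3 {s : ℝ → ℝ → ℝ → ℝ} : s ∈ SK3 ↔ ∃ c, s = skPoly c := by
  constructor
  · rintro ⟨c, hc⟩
    exact ⟨c, funext₃ hc⟩
  · rintro ⟨c, rfl⟩
    exact ⟨c, fun _ _ _ => rfl⟩

lemma mem_UK {u : ℝ → ℝ → ℝ → (Fin 3 → ℝ)} :
    u ∈ UK ↔ ∃ b α β γ, u = ukField b α β γ := by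
  constructor
  · rintro ⟨b, α₁, α₂, α₃, α₄, β₁, β₂, β₃, β₄, γ₁, γ₂, γ₃, γ₄, hu⟩
    exact ⟨b, ![α₁, α₂, α₃, α₄], ![β₁, β₂, β₃, β₄], ![γ₁, γ₂, γ₃, γ₄], funext₃ hu⟩
  · rintro ⟨b, α, β, γ, rfl⟩
    exact ⟨b, α 0, α 1, α 2, α 3, β 0, β 1, β 2, β 3, γ 0, γ 1, γ 2, γ 3, fun _ _ _ => rfl⟩

lemma mem_BDM13 {w : ℝ → ℝ → ℝ → (Fin 3 → ℝ)} : w ∈ BDM13 ↔ ∃ a c, w = bdmField a c := by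
  constructor
  · rintro ⟨a, c₁, c₂, c₃, c₄, c₅, c₆, hw⟩
    exact ⟨a, ![c₁, c₂, c₃, c₄, c₅, c₆], funext₃ hw⟩
  · rintro ⟨a, c, rfl⟩
    exact ⟨a, c 0, c 1, c 2, c 3, c 4, c 5, fun _ _ _ => rfl⟩

lemma grad3_skPoly (c : Fin 20 → ℝ) :
    grad3 (skPoly c) = ukField
      ![![c 1, 2 * c 4, c 7, c 8, 2 * c 10, 2 * c 11, c 16, 2 * c 17],
        ![c 2, c 7, 2 * c 5, c 9, 2 * c 12, c 16, 2 * c 14, 2 * c 18],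
        ![c 3, c 8, c 9, 2 * c 6, c 16, 2 * c 13, 2 * c 15, 2 * c 19]]
      ![c 18, c 19, c 12, c 13] ![c 17, c 19, c 10, c 15] ![c 17, c 18, c 11, c 14] := by
  funext x y z
  ext i
  fin_cases i <;>
  · simp only [grad3, pd1, pd2, pd3, skPoly, ukField]
    simp (disch := fun_prop) only [deriv_fun_add, deriv_mul_const_field, deriv_const_mul_field,
      deriv_pow_field, deriv_const, deriv_const_mul_id, Nat.cast_ofNat, Nat.add_one_sub_one,
      pow_one, Fin.zero_eta, Fin.mk_one, Fin.reduceFinMk, Fin.isValue, Matrix.cons_val]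
    ring

lemma curl3_ukField (b : Fin 3 → Fin 8 → ℝ) (α β γ : Fin 4 → ℝ) :
    curl3 (ukField b α β γ) = bdmField
      ![![b 2 2 - b 1 3, b 2 4 - b 1 5, 2 * γ 3 - b 1 6, b 2 6 - 2 * β 3],
        ![b 0 3 - b 2 1, b 0 5 - 2 * γ 2, b 0 6 - b 2 4, 2 * α 3 - b 2 5],
        ![b 1 1 - b 0 2, 2 * β 2 - b 0 4, b 1 4 - 2 * α 2, b 1 5 - b 0 6]]
      ![γ 1 - b 1 7 / 2, γ 0 - b 0 7 / 2, α 0 - b 1 7 / 2, α 1 - b 2 7 / 2,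
        β 1 - b 2 7 / 2, β 0 - b 0 7 / 2] := by
  funext x y z
  ext i
  fin_cases i <;>
  · simp only [curl3, pd1, pd2, pd3, ukField, bdmField, Matrix.cons_val_zero,
      Matrix.cons_val_one, Matrix.cons_val_two, Matrix.head_cons, Matrix.tail_cons]
    simp (disch := fun_prop) only [deriv_fun_add, deriv_mul_const_field, deriv_const_mul_field,
      deriv_pow_field, deriv_const, deriv_const_mul_id, Nat.cast_ofNat, Nat.add_one_sub_one,
      pow_one, Fin.zero_eta, Fin.mk_one, Fin.reduceFinMk, Fin.isValue, Matrix.cons_val]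
    ring

lemma dv3_bdmField (a : Fin 3 → Fin 4 → ℝ) (c : Fin 6 → ℝ) :
    dv3 (bdmField a c) = fun _ _ _ => a 0 1 + a 1 2 + a 2 3 := by
  funext x y z
  simp only [dv3, pd1, pd2, pd3, bdmField, Matrix.cons_val_zero, Matrix.cons_val_one,
    Matrix.cons_val_two, Matrix.head_cons, Matrix.tail_cons]
  simp (disch := fun_prop) only [deriv_fun_add, deriv_fun_sub, deriv_mul_const_field,
    deriv_const_mul_field, deriv_pow_field, deriv_const, deriv_const_mul_id, Nat.cast_ofNat,
    Nat.add_one_sub_one, pow_one]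
  ring

lemma quadratic_coeffs_eq_zero {p₀ p₁ p₂ p₃ p₁₁ p₂₂ p₃₃ p₁₂ p₁₃ p₂₃ : ℝ}
    (h : ∀ x y z : ℝ, p₀ + p₁ * x + p₂ * y + p₃ * z + p₁₁ * x ^ 2 + p₂₂ * y ^ 2 + p₃₃ * z ^ 2
      + p₁₂ * x * y + p₁₃ * x * z + p₂₃ * y * z = 0) :
    p₀ = 0 ∧ p₁ = 0 ∧ p₂ = 0 ∧ p₃ = 0 ∧ p₁₁ = 0 ∧ p₂₂ = 0 ∧ p₃₃ = 0 ∧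
      p₁₂ = 0 ∧ p₁₃ = 0 ∧ p₂₃ = 0 := by
  have h₀ := h 0 0 0
  have hx := h 1 0 0
  have hx' := h (-1) 0 0
  have hy := h 0 1 0
  have hy' := h 0 (-1) 0
  have hz := h 0 0 1
  have hz' := h 0 0 (-1)
  have hxy := h 1 1 0
  have hxz := h 1 0 1
  have hyz := h 0 1 1
  norm_num at h₀ hx hx' hy hy' hz hz' hxy hxz hyz
  refine ⟨?_, ?_, ?_, ?_, ?_, ?_, ?_, ?_, ?_, ?_⟩ <;> linarith

lemma bdmField_eq_zero_iff {a : Fin 3 → Fin 4 → ℝ} {c : Fin 6 → ℝ} :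
    bdmField a c = (fun _ _ _ => 0) ↔ a = 0 ∧ c = 0 := by
  refine ⟨fun h => ?_, fun ⟨ha, hc⟩ => ?_⟩
  · have hw (x y z : ℝ) : bdmField a c x y z = 0 := congrFun₃ h x y z
    simp only [bdmField, Matrix.cons_eq_zero_iff, Matrix.zero_empty, and_true] at hw
    have hw₀ (x y z : ℝ) : a 0 0 + a 0 1 * x + a 0 2 * y + a 0 3 * z + (c 1 - c 5) * x ^ 2
        + 0 * y ^ 2 + 0 * z ^ 2 + 2 * c 0 * x * y + -2 * c 4 * x * z + 0 * y * z = 0 := by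
      linear_combination (hw x y z).1
    have hw₁ (x y z : ℝ) : a 1 0 + a 1 1 * x + a 1 2 * y + a 1 3 * z + 0 * x ^ 2
        + (c 2 - c 0) * y ^ 2 + 0 * z ^ 2 + -2 * c 1 * x * y + 0 * x * z + 2 * c 3 * y * z
        = 0 := by
      linear_combination (hw x y z).2.1
    have hw₂ (x y z : ℝ) : a 2 0 + a 2 1 * x + a 2 2 * y + a 2 3 * z + 0 * x ^ 2
        + 0 * y ^ 2 + (c 4 - c 3) * z ^ 2 + 0 * x * y + 2 * c 5 * x * z + -2 * c 2 * y * z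
        = 0 := by
      linear_combination (hw x y z).2.2
    obtain ⟨h00, h01, h02, h03, -, -, -, hc0, hc4, -⟩ := quadratic_coeffs_eq_zero hw₀
    obtain ⟨h10, h11, h12, h13, -, -, -, hc1, -, hc3⟩ := quadratic_coeffs_eq_zero hw₁
    obtain ⟨h20, h21, h22, h23, -, -, -, -, hc5, hc2⟩ := quadratic_coeffs_eq_zero hw₂
    constructor
    · funext i j
      fin_cases i <;> fin_cases j <;> assumption
    · funext k
      fin_cases k <;> simp only [Fin.zero_eta, Fin.mk_one, Fin.reduceFinMk, Fin.isValue,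
        Pi.zero_apply] <;> linarith
  · subst ha hc
    funext x y z i
    fin_cases i <;> simp [bdmField]

lemma eq_const_of_grad3_eq_zero {s : ℝ → ℝ → ℝ → ℝ}
    (h₁ : ∀ y z, Differentiable ℝ fun t => s t y z)
    (h₂ : ∀ x z, Differentiable ℝ fun t => s x t z)
    (h₃ : ∀ x y, Differentiable ℝ fun t => s x y t)
    (hs : grad3 s = fun _ _ _ => 0) : s = fun _ _ _ => s 0 0 0 := by
  have hpd (x y z : ℝ) : pd1 s x y z = 0 ∧ pd2 s x y z = 0 ∧ pd3 s x y z = 0 := by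
    simpa [grad3] using congrFun₃ hs x y z
  funext x y z
  calc s x y z = s 0 y z := is_const_of_deriv_eq_zero (h₁ y z) (fun t => (hpd t y z).1) x 0
    _ = s 0 0 z := is_const_of_deriv_eq_zero (h₂ 0 z) (fun t => (hpd 0 t z).2.1) y 0
    _ = s 0 0 0 := is_const_of_deriv_eq_zero (h₃ 0 0) (fun t => (hpd 0 0 t).2.2) z 0

lemma curl3_grad3_skPoly (c : Fin 20 → ℝ) : curl3 (grad3 (skPoly c)) = fun _ _ _ => 0 := by
  rw [grad3_skPoly, curl3_ukField, bdmField_eq_zero_iff]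
  constructor
  · ext i j
    fin_cases i <;> fin_cases j <;>
      simp only [Fin.zero_eta, Fin.mk_one, Fin.reduceFinMk, Fin.isValue, Matrix.cons_val,
        Pi.zero_apply] <;> ring
  · ext k
    fin_cases k <;>
      simp only [Fin.zero_eta, Fin.mk_one, Fin.reduceFinMk, Fin.isValue, Matrix.cons_val,
        Pi.zero_apply] <;> ring

lemma exists_grad3_skPoly_eq_of_curl3_eq_zero {b : Fin 3 → Fin 8 → ℝ} {α β γ : Fin 4 → ℝ}
    (h : curl3 (ukField b α β γ) = fun _ _ _ => 0) :
    ∃ c, grad3 (skPoly c) = ukField b α β γ := by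
  rw [curl3_ukField, bdmField_eq_zero_iff] at h
  obtain ⟨ha, hc⟩ := h
  simp only [funext_iff, Fin.forall_fin_succ, Pi.zero_apply, Matrix.cons_val_zero,
    Matrix.cons_val_succ, Matrix.cons_val_fin_one, forall_const] at ha hc
  -- integrate the first component in `x`; the terms free of `x` come from the other two
  refine ⟨![0, b 0 0, b 1 0, b 2 0, b 0 1 / 2, b 1 2 / 2, b 2 3 / 2, b 0 2, b 0 3, b 1 3,
    b 0 4 / 2, b 0 5 / 2, α 2, α 3, b 1 6 / 2, b 2 6 / 2, b 0 6, b 0 7 / 2, α 0, α 1], ?_⟩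
  rw [grad3_skPoly]
  congr 1
  · ext i j
    fin_cases i <;> fin_cases j <;>
      simp only [Fin.zero_eta, Fin.mk_one, Fin.reduceFinMk, Fin.isValue, Matrix.cons_val] <;>
      linarith
  all_goals
    ext k
    fin_cases k <;>
      simp only [Fin.zero_eta, Fin.mk_one, Fin.reduceFinMk, Fin.isValue, Matrix.cons_val] <;>
      linarith

lemma exists_curl3_ukField_eq_of_dv3_eq_zero {a : Fin 3 → Fin 4 → ℝ} {c : Fin 6 → ℝ}
    (h : dv3 (bdmField a c) = fun _ _ _ => 0) :
    ∃ b α β γ, curl3 (ukField b α β γ) = bdmField a c := by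
  have ha : a 0 1 + a 1 2 + a 2 3 = 0 := by
    simpa [dv3_bdmField] using congrFun₃ h 0 0 0
  -- the cubic terms are the preimages `(0,0,xy²), …` of the definition of `BDM13`, weighted by
  -- `c`; the remaining terms are a potential of the affine part, divergence-free by `ha`
  refine ⟨![![0, 0, 0, a 1 0, 0, a 1 1, a 0 1 + a 1 2, 0], ![0, a 2 0, 0, 0, a 2 2, 0, 0, 0],
      ![0, 0, a 0 0, 0, a 0 1, 0, a 0 3, 0]],
    ![c 2, c 3, 0, a 1 3 / 2], ![c 5, c 4, a 2 1 / 2, 0], ![c 1, c 0, 0, a 0 2 / 2], ?_⟩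
  rw [curl3_ukField]
  congr 1
  · ext i j
    fin_cases i <;> fin_cases j <;>
      simp only [Fin.zero_eta, Fin.mk_one, Fin.reduceFinMk, Fin.isValue, Matrix.cons_val] <;>
      linarith
  · ext k
    fin_cases k <;>
      simp only [Fin.zero_eta, Fin.mk_one, Fin.reduceFinMk, Fin.isValue, Matrix.cons_val] <;> ring

lemma ker_grad3_SK3 :
    {s ∈ SK3 | grad3 s = fun _ _ _ => 0} = {s | ∃ k : ℝ, s = fun _ _ _ => k} := by
  ext s
  simp only [Set.mem_ofPred_eq, mem_SK3]
  constructor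
  · rintro ⟨⟨c, rfl⟩, hs⟩
    refine ⟨_, eq_const_of_grad3_eq_zero ?_ ?_ ?_ hs⟩ <;> intros <;> unfold skPoly <;> fun_prop
  · rintro ⟨k, rfl⟩
    refine ⟨⟨Pi.single 0 k, ?_⟩, ?_⟩
    · funext x y z
      simp [skPoly]
    · funext x y z
      simp [grad3, pd1, pd2, pd3]

lemma image_grad3_SK3 :
    {u | ∃ s ∈ SK3, u = grad3 s} = {u ∈ UK | curl3 u = fun _ _ _ => 0} := by
  ext u
  simp only [Set.mem_ofPred_eq, mem_SK3, mem_UK]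
  constructor
  · rintro ⟨s, ⟨c, rfl⟩, rfl⟩
    exact ⟨⟨_, _, _, _, grad3_skPoly c⟩, curl3_grad3_skPoly c⟩
  · rintro ⟨⟨b, α, β, γ, rfl⟩, hu⟩
    obtain ⟨c, hc⟩ := exists_grad3_skPoly_eq_of_curl3_eq_zero hu
    exact ⟨_, ⟨c, rfl⟩, hc.symm⟩

lemma image_curl3_UK :
    {w | ∃ u ∈ UK, w = curl3 u} = {w ∈ BDM13 | dv3 w = fun _ _ _ => 0} := by
  ext w
  simp only [Set.mem_ofPred_eq, mem_UK, mem_BDM13]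
  constructor
  · rintro ⟨u, ⟨b, α, β, γ, rfl⟩, rfl⟩
    refine ⟨⟨_, _, curl3_ukField b α β γ⟩, ?_⟩
    rw [curl3_ukField, dv3_bdmField]
    funext x y z
    simp
  · rintro ⟨⟨a, c, rfl⟩, hw⟩
    obtain ⟨b, α, β, γ, hu⟩ := exists_curl3_ukField_eq_of_dv3_eq_zero hw
    exact ⟨_, ⟨b, α, β, γ, rfl⟩, hu.symm⟩

lemma image_dv3_BDM13 :
    {g : ℝ → ℝ → ℝ → ℝ | ∃ w ∈ BDM13, g = dv3 w} = {g | ∃ k : ℝ, g = fun _ _ _ => k} := by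
  ext g
  simp only [Set.mem_ofPred_eq, mem_BDM13]
  constructor
  · rintro ⟨w, ⟨a, c, rfl⟩, rfl⟩
    exact ⟨_, dv3_bdmField a c⟩
  · rintro ⟨k, rfl⟩
    refine ⟨_, ⟨Pi.single 0 (Pi.single 1 k), 0, rfl⟩, ?_⟩
    rw [dv3_bdmField]
    simp

/-- Exactness of the 3D polynomial sequence
`ℝ → S_K → U_K → BDM₁(K) → P₀ → 0`:
the kernel of `grad` on `S_K` is the constants, the image of `grad` is the
kernel of `curl` in `U_K`, the image of `curl` is the kernel of `div` in
`BDM₁`, and `div` maps `BDM₁` onto `P₀`. -/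
theorem stmt_11 :
    ({s ∈ SK3 | grad3 s = fun _ _ _ => 0} = {s | ∃ c : ℝ, s = fun _ _ _ => c}) ∧
    ({u | ∃ s ∈ SK3, u = grad3 s} = {u ∈ UK | curl3 u = fun _ _ _ => 0}) ∧
    ({w | ∃ u ∈ UK, w = curl3 u} = {w ∈ BDM13 | dv3 w = fun _ _ _ => 0}) ∧
    ({g : ℝ → ℝ → ℝ → ℝ | ∃ w ∈ BDM13, g = dv3 w} = {g | ∃ c : ℝ, g = fun _ _ _ => c}) :=
  ⟨ker_grad3_SK3, image_grad3_SK3, image_curl3_UK, image_dv3_BDM13⟩
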